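/- arXiv:2602.02254 — 9 statements merged into one kernel-verified Lean document; each statement's English description precedes it below -/
import Mathlib

section
/- Let I be a stable matching instance with complete preference lists on both sides (|R| = |H| = n), and let Î be a prefix-truncated instance of I. If some perfect stable matching μ of I exists in Î (i.e., μ(h) is on h's truncated list for every hospital h), then every stable matching of Î is perfect and is stable in I. -/
/-- A stable matching instance: each resident has a preference list over hospitals
and each hospital has a preference list over residents. -/
structure SMInstance (R H : Type*) where
  Lr : R → List H
  Lh : H → List R

/-- A (partial) matching, given by mutually consistent partner functions. -/
structure SMatching (R H : Type*) where
  mr : R → Option H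
  mh : H → Option R
  consistent : ∀ r h, mr r = some h ↔ mh h = some r

/-- An agent with preference list `l`, currently matched according to `o`,
strictly prefers `x` to its current situation: `x` is acceptable, and the agent
is either unmatched or ranks `x` above its current partner. -/
def prefersOver {α : Type*} [DecidableEq α] (l : List α) (x : α) (o : Option α) : Prop :=
  x ∈ l ∧ ∀ y, o = some y → l.idxOf x < l.idxOf y

/-- With respect to list `l`, outcome `o₁` is weakly preferred to outcome `o₂`:
whenever `o₂` is matched, so is `o₁`, to a partner of weakly better rank. -/
def weaklyPrefers {α : Type*} [DecidableEq α] (l : List α) (o₁ o₂ : Option α) : Prop :=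
  ∀ y, o₂ = some y → ∃ x, o₁ = some x ∧ l.idxOf x ≤ l.idxOf y

variable {R H : Type*} [DecidableEq R] [DecidableEq H]

/-- `(r, h)` is a blocking pair for `μ` in instance `I`. -/
def SMInstance.Blocking (I : SMInstance R H) (μ : SMatching R H) (r : R) (h : H) : Prop :=
  prefersOver (I.Lr r) h (μ.mr r) ∧ prefersOver (I.Lh h) r (μ.mh h)

/-- The matching `μ` exists in the instance `I`: matched partners are on each other's lists. -/
def SMInstance.ExistsIn (I : SMInstance R H) (μ : SMatching R H) : Prop :=
  (∀ r h, μ.mr r = some h → h ∈ I.Lr r) ∧ (∀ h r, μ.mh h = some r → r ∈ I.Lh h)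

/-- `μ` is stable in `I`: it exists in `I` and admits no blocking pair. -/
def SMInstance.IsStable (I : SMInstance R H) (μ : SMatching R H) : Prop :=
  I.ExistsIn μ ∧ ∀ r h, ¬ I.Blocking μ r h

/-- Preference lists are strict (no repetitions). -/
def SMInstance.Nodups (I : SMInstance R H) : Prop :=
  (∀ r, (I.Lr r).Nodup) ∧ (∀ h, (I.Lh h).Nodup)

/-- Preference lists are complete: every agent ranks every agent on the other side. -/
def SMInstance.Complete (I : SMInstance R H) : Prop :=
  (∀ r h, h ∈ I.Lr r) ∧ (∀ h r, r ∈ I.Lh h)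

/-!
Since `Î` keeps a prefix of each hospital's list and restricts residents' lists consistently,
preferences between agents that remain acceptable are the same in `I` and `Î`. Hence `μ` is
stable in `Î`, and by the rural hospitals theorem every stable matching `ν` of `Î` matches all
residents, as `μ` does, hence (as `|R| = |H|`) all hospitals.
Finally a blocking pair `(r, h)` of `ν` in `I` survives in `Î`: `h` ranks `r` above `ν(h)`,
which lies in the kept prefix of `h`'s list, so `r` lies in it too.
-/

namespace List

variable {α : Type*} [DecidableEq α]

theorem idxOf_filter_lt_idxOf_filter_iff (p : α → Bool) {l : List α} {a b : α}
    (ha : p a) (hb : p b) :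
    (l.filter p).idxOf a < (l.filter p).idxOf b ↔ l.idxOf a < l.idxOf b := by
  induction l with
  | nil => simp
  | cons c t ih =>
    by_cases hpc : p c <;> grind

theorem mem_take_of_idxOf_lt {l : List α} {n : ℕ} {x y : α} (hx : x ∈ l)
    (hxy : l.idxOf x < l.idxOf y) (hy : y ∈ l.take n) : x ∈ l.take n := by
  have hyn := (mem_take_iff_idxOf_lt (mem_of_mem_take hy)).1 hy
  exact (mem_take_iff_idxOf_lt hx).2 (hxy.trans hyn)

end List

section Preferences

variable {α : Type*} [DecidableEq α]

theorem prefersOver_some_iff {l : List α} {x y : α} :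
    prefersOver l x (some y) ↔ x ∈ l ∧ l.idxOf x < l.idxOf y := by
  simp [prefersOver]

theorem exists_idxOf_lt_of_not_prefersOver {l : List α} {x : α} {o : Option α}
    (hx : x ∈ l) (hol : ∀ y, o = some y → y ∈ l) (hox : o ≠ some x)
    (h : ¬ prefersOver l x o) : ∃ y, o = some y ∧ l.idxOf y < l.idxOf x := by
  unfold prefersOver at h
  push Not at h
  obtain ⟨y, rfl, hle⟩ := h hx
  refine ⟨y, rfl, lt_of_le_of_ne hle fun heq => hox ?_⟩
  rw [(List.idxOf_inj (hol y rfl)).1 heq]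

theorem prefersOver_iff_of_idxOf_lt_iff {l l' : List α} (hsub : l' ⊆ l)
    (hord : ∀ a ∈ l', ∀ b ∈ l', l'.idxOf a < l'.idxOf b ↔ l.idxOf a < l.idxOf b)
    {x : α} {o : Option α} (hx : x ∈ l') (hol : ∀ y, o = some y → y ∈ l') :
    prefersOver l' x o ↔ prefersOver l x o :=
  ⟨fun h => ⟨hsub hx, fun y hy => (hord x hx y (hol y hy)).1 (h.2 y hy)⟩,
    fun h => ⟨hx, fun y hy => (hord x hx y (hol y hy)).2 (h.2 y hy)⟩⟩

theorem prefersOver_take_iff {l : List α} {n : ℕ} {x : α} {o : Option α}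
    (hx : x ∈ l.take n) (hol : ∀ y, o = some y → y ∈ l.take n) :
    prefersOver (l.take n) x o ↔ prefersOver l x o :=
  prefersOver_iff_of_idxOf_lt_iff (List.take_subset n l)
    (fun a ha b hb => by
      rw [(l.take_prefix n).idxOf_eq_of_mem ha, (l.take_prefix n).idxOf_eq_of_mem hb])
    hx hol

theorem prefersOver_filter_iff (p : α → Bool) {l : List α} {x : α} {o : Option α}
    (hx : x ∈ l.filter p) (hol : ∀ y, o = some y → y ∈ l.filter p) :
    prefersOver (l.filter p) x o ↔ prefersOver l x o :=
  prefersOver_iff_of_idxOf_lt_iff (List.filter_subset_self l)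
    (fun _ ha _ hb => List.idxOf_filter_lt_idxOf_filter_iff p
      (List.mem_filter.1 ha).2 (List.mem_filter.1 hb).2)
    hx hol

end Preferences

namespace SMatching

theorem eq_of_mr_eq_some {R H : Type*} (μ : SMatching R H) {r r' : R} {h : H}
    (hr : μ.mr r = some h) (hr' : μ.mr r' = some h) : r = r' :=
  Option.some_injective _ (((μ.consistent r h).1 hr).symm.trans ((μ.consistent r' h).1 hr'))

theorem mh_ne_none_of_card_eq {R H : Type*} [Fintype R] [Fintype H] (μ : SMatching R H)
    (hcard : Fintype.card R = Fintype.card H) (hR : ∀ r, μ.mr r ≠ none) (h : H) :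
    μ.mh h ≠ none := by
  choose f hf using fun r => Option.ne_none_iff_exists'.1 (hR r)
  have hf_inj : f.Injective := fun a b hab => μ.eq_of_mr_eq_some (hf a) (hab ▸ hf b)
  obtain ⟨r, rfl⟩ := ((Fintype.bijective_iff_injective_and_card f).2 ⟨hf_inj, hcard⟩).2 h
  simp [(μ.consistent r (f r)).1 (hf r)]

end SMatching

namespace SMInstance

variable {I Ihat : SMInstance R H} {μ ν : SMatching R H} {ρ : H → ℕ}

def PrefersMatchingOver (I : SMInstance R H) (μ ν : SMatching R H) (r : R) : Prop :=
  ∃ h, μ.mr r = some h ∧ prefersOver (I.Lr r) h (ν.mr r)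

/-- If `r` prefers `μ(r) = h` to `ν(r)`, stability of `ν` forces `h` to hold someone better,
`r' = ν(h)`, and then stability of `μ` forces `r'` to prefer `μ(r')` to `h`. -/
theorem exists_prefersMatchingOver_mr_eq (hμ : I.IsStable μ) (hν : I.IsStable ν) {r : R}
    (hr : I.PrefersMatchingOver μ ν r) :
    ∃ r', I.PrefersMatchingOver μ ν r' ∧ ν.mr r' = μ.mr r := by
  obtain ⟨h, hμr, hpref⟩ := hr
  have hμh := (μ.consistent r h).1 hμr
  have hνr_ne : ν.mr r ≠ some h := fun heq => lt_irrefl _ (hpref.2 h heq)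
  obtain ⟨r', hνh, hr'r⟩ := exists_idxOf_lt_of_not_prefersOver (hμ.1.2 h r hμh)
    (hν.1.2 h) (fun heq => hνr_ne ((ν.consistent r h).2 heq))
    (fun hh => hν.2 r h ⟨hpref, hh⟩)
  have hνr' := (ν.consistent r' h).2 hνh
  have hμr'_ne : μ.mr r' ≠ some h := fun heq =>
    hr'r.ne (by rw [Option.some_injective _ (hμh.symm.trans ((μ.consistent r' h).1 heq))])
  obtain ⟨h', hμr', hh'h⟩ := exists_idxOf_lt_of_not_prefersOver (hν.1.1 r' h hνr')
    (hμ.1.1 r') hμr'_ne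
    (fun hr' => hμ.2 r' h ⟨hr', by rw [hμh, prefersOver_some_iff]; exact ⟨hν.1.2 h r' hνh, hr'r⟩⟩)
  exact ⟨r', ⟨h', hμr', by rw [hνr', prefersOver_some_iff]; exact ⟨hμ.1.1 r' h' hμr', hh'h⟩⟩,
    hνr'.trans hμr.symm⟩

/-- Half of the rural hospitals theorem. The map `r ↦ ν⁻¹(μ(r))` sends the residents preferring
their `μ`-partner to their `ν`-partner injectively, hence onto, into themselves, so all of them are
matched in `ν`; a resident unmatched in `ν` would be one of them. -/
theorem IsStable.mr_ne_none [Finite R] (hν : I.IsStable ν) (hμ : I.IsStable μ)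
    (hμR : ∀ r, μ.mr r ≠ none) (r : R) : ν.mr r ≠ none := by
  choose f hf using fun a : {a // I.PrefersMatchingOver μ ν a} =>
    exists_prefersMatchingOver_mr_eq hμ hν a.2
  let φ : {a // I.PrefersMatchingOver μ ν a} → {a // I.PrefersMatchingOver μ ν a} :=
    fun a => ⟨f a, (hf a).1⟩
  have hφ : φ.Injective := by
    intro a b hab
    obtain ⟨h, ha, -⟩ := a.2
    have hfab : f a = f b := congrArg Subtype.val hab
    exact Subtype.ext (μ.eq_of_mr_eq_some ha
      (((hf b).2.symm.trans (hfab ▸ (hf a).2)).trans ha))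
  intro hr
  obtain ⟨h, hμr⟩ := Option.ne_none_iff_exists'.1 (hμR r)
  obtain ⟨a, ha⟩ := Finite.injective_iff_surjective.1 hφ
    ⟨r, h, hμr, hμ.1.1 r h hμr, by simp [hr]⟩
  obtain ⟨h', hμa, -⟩ := a.2
  have hfa : f a = r := congrArg Subtype.val ha
  simp [← hfa, (hf a).2, hμa] at hr

def IsPrefixTruncation (Ihat I : SMInstance R H) (ρ : H → ℕ) : Prop :=
  (∀ h, Ihat.Lh h = (I.Lh h).take (ρ h)) ∧
    ∀ r, Ihat.Lr r = (I.Lr r).filter (fun h => decide (r ∈ Ihat.Lh h))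

theorem IsPrefixTruncation.mem_Lr {R H : Type*} [DecidableEq R] {Ihat I : SMInstance R H}
    {ρ : H → ℕ} (ht : Ihat.IsPrefixTruncation I ρ) {r : R} {h : H} (hh : h ∈ I.Lr r)
    (hr : r ∈ Ihat.Lh h) : h ∈ Ihat.Lr r :=
  ht.2 r ▸ List.mem_filter.2 ⟨hh, decide_eq_true hr⟩

theorem IsPrefixTruncation.blocking_iff (ht : Ihat.IsPrefixTruncation I ρ)
    (hν : Ihat.ExistsIn ν) {r : R} {h : H} (hr : r ∈ Ihat.Lh h) (hh : h ∈ Ihat.Lr r) :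
    Ihat.Blocking ν r h ↔ I.Blocking ν r h := by
  refine and_congr ?_ ?_
  · rw [ht.2 r] at hh ⊢
    exact prefersOver_filter_iff _ hh fun y hy => ht.2 r ▸ hν.1 r y hy
  · rw [ht.1 h] at hr ⊢
    exact prefersOver_take_iff hr fun y hy => ht.1 h ▸ hν.2 h y hy

theorem IsPrefixTruncation.isStable (ht : Ihat.IsPrefixTruncation I ρ) (hμ : I.IsStable μ)
    (hsurv : ∀ h r, μ.mh h = some r → r ∈ Ihat.Lh h) : Ihat.IsStable μ := by
  have hex : Ihat.ExistsIn μ :=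
    ⟨fun r h hrh => ht.mem_Lr (hμ.1.1 r h hrh) (hsurv h r ((μ.consistent r h).1 hrh)), hsurv⟩
  exact ⟨hex, fun r h hb => hμ.2 r h ((ht.blocking_iff hex hb.2.1 hb.1.1).1 hb)⟩

theorem IsPrefixTruncation.isStable_of_isStable (ht : Ihat.IsPrefixTruncation I ρ)
    (hν : Ihat.IsStable ν) (hνH : ∀ h, ν.mh h ≠ none) : I.IsStable ν := by
  have hex : I.ExistsIn ν :=
    ⟨fun r h hrh => List.mem_of_mem_filter (ht.2 r ▸ hν.1.1 r h hrh),
      fun h r hhr => List.mem_of_mem_take (ht.1 h ▸ hν.1.2 h r hhr)⟩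
  refine ⟨hex, fun r h hb => ?_⟩
  obtain ⟨r', hνh⟩ := Option.ne_none_iff_exists'.1 (hνH h)
  have hr : r ∈ Ihat.Lh h := by
    have hr' := hν.1.2 h r' hνh
    rw [ht.1 h] at hr' ⊢
    exact List.mem_take_of_idxOf_lt hb.2.1 (hb.2.2 r' hνh) hr'
  exact hν.2 r h ((ht.blocking_iff hν.1 hr (ht.mem_Lr hb.1.1 hr)).2 hb)

end SMInstance

theorem prefix_truncation_preserves_perfection_general
    {R H : Type*} [DecidableEq R] [DecidableEq H] [Fintype R] [Fintype H]
    (hcard : Fintype.card R = Fintype.card H)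
    (I Ihat : SMInstance R H)
    (ρ : H → ℕ)
    (hLh : ∀ h, Ihat.Lh h = (I.Lh h).take (ρ h))
    (hLr : ∀ r, Ihat.Lr r = (I.Lr r).filter (fun h => decide (r ∈ Ihat.Lh h)))
    (μ : SMatching R H) (hstab : I.IsStable μ)
    (hperf : (∀ r, μ.mr r ≠ none) ∧ (∀ h, μ.mh h ≠ none))
    (hsurv : ∀ h r, μ.mh h = some r → r ∈ Ihat.Lh h)
    (ν : SMatching R H) (hν : Ihat.IsStable ν) :
    ((∀ r, ν.mr r ≠ none) ∧ (∀ h, ν.mh h ≠ none)) ∧ I.IsStable ν := by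
  have ht : Ihat.IsPrefixTruncation I ρ := ⟨hLh, hLr⟩
  have hνR : ∀ r, ν.mr r ≠ none := hν.mr_ne_none (ht.isStable hstab hsurv) hperf.1
  have hνH : ∀ h, ν.mh h ≠ none := ν.mh_ne_none_of_card_eq hcard hνR
  exact ⟨⟨hνR, hνH⟩, ht.isStable_of_isStable hν hνH⟩

/-- If `I` has complete lists on both sides (equal cardinalities) and a
perfect stable matching `μ` of `I` survives in the prefix-truncated instance `Ihat`, then
every stable matching of `Ihat` is perfect and stable in `I`. -/
theorem prefix_truncation_preserves_perfection
    {R H : Type*} [DecidableEq R] [DecidableEq H] [Fintype R] [Fintype H]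
    (hcard : Fintype.card R = Fintype.card H)
    (I Ihat : SMInstance R H) (hC : I.Complete) (hN : I.Nodups)
    (ρ : H → ℕ)
    (hLh : ∀ h, Ihat.Lh h = (I.Lh h).take (ρ h))
    (hLr : ∀ r, Ihat.Lr r = (I.Lr r).filter (fun h => decide (r ∈ Ihat.Lh h)))
    (μ : SMatching R H) (hstab : I.IsStable μ)
    (hperf : (∀ r, μ.mr r ≠ none) ∧ (∀ h, μ.mh h ≠ none))
    (hsurv : ∀ h r, μ.mh h = some r → r ∈ Ihat.Lh h)
    (ν : SMatching R H) (hν : Ihat.IsStable ν) :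
    ((∀ r, ν.mr r ≠ none) ∧ (∀ h, ν.mh h ≠ none)) ∧ I.IsStable ν :=
  prefix_truncation_preserves_perfection_general hcard I Ihat ρ hLh hLr μ hstab hperf hsurv ν hν
end

section
/- There exists a stable matching instance with 4 residents and 4 hospitals having a unique stable matching μ, together with windows of radius 1 around each hospital's rank of its μ-partner, such that running hospital-proposing deferred acceptance where each hospital proposes only to residents inside its window produces a matching with a blocking pair in the original instance. -/
/-- One step of deferred acceptance with proposers' lists `Lp` and receivers' lists `Lq`.
The state consists of, for each proposer, the index of its next proposal, and, for each
receiver, its tentatively held proposer.  An unmatched proposer with proposals remaining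
proposes to the next entry of its list; the receiver keeps the better of its tentative
partner and the new proposer. -/
def daStep (n : ℕ) (Lp Lq : Fin n → List (Fin n))
    (s : (Fin n → ℕ) × (Fin n → Option (Fin n))) :
    (Fin n → ℕ) × (Fin n → Option (Fin n)) :=
  match (List.finRange n).find?
      (fun p => decide ((∀ q, s.2 q ≠ some p) ∧ s.1 p < (Lp p).length)) with
  | none => s
  | some p =>
    match (Lp p)[s.1 p]? with
    | none => s
    | some q =>
      let next' := Function.update s.1 p (s.1 p + 1)
      match s.2 q with
      | none => (next', Function.update s.2 q (some p))
      | some p' =>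
        if (Lq q).idxOf p < (Lq q).idxOf p' then
          (next', Function.update s.2 q (some p))
        else (next', s.2)

/-- Run `k` steps of deferred acceptance from the initial state. -/
def daRun (n : ℕ) (Lp Lq : Fin n → List (Fin n)) :
    ℕ → (Fin n → ℕ) × (Fin n → Option (Fin n))
  | 0 => (fun _ => 0, fun _ => none)
  | k + 1 => daStep n Lp Lq (daRun n Lp Lq k)

/-- The partner of proposer `p` induced by the receivers' held proposers. -/
def partnerOf (n : ℕ) (held : Fin n → Option (Fin n)) (p : Fin n) : Option (Fin n) :=
  (List.finRange n).find? (fun q => held q == some p)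

/-- `(r, h)` is a blocking pair with respect to the partner functions `mr`, `mh`. -/
def Blocking {n : ℕ} (Lr Lh : Fin n → List (Fin n))
    (mr mh : Fin n → Option (Fin n)) (r h : Fin n) : Prop :=
  prefersOver (Lr r) h (mr r) ∧ prefersOver (Lh h) r (mh h)

/-- A perfect matching `μ` (resident → hospital) with inverse `ν` is stable for complete
lists: no pair ranks each other above their assigned partners. -/
def StableTM {n : ℕ} (Lr Lh : Fin n → List (Fin n)) (μ ν : Fin n → Fin n) : Prop :=
  ∀ r h, ¬ ((Lr r).idxOf h < (Lr r).idxOf (μ r) ∧ (Lh h).idxOf r < (Lh h).idxOf (ν h))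

/-!
The windows around the stable partners are `h1 : [r2, r3, r1]`, `h2 : [r2, r1, r4]`,
`h3 : [r4, r1]` and `h4 : [r3, r2, r4]`; in particular `h2`'s window around `r1` (its third
choice) cuts off its first choice `r3`. Windowed deferred acceptance then stops after five
proposals at `{(r1,h2), (r2,h1), (r3,h4), (r4,h3)}`: no hospital `r3` prefers to `h4` ever
proposes to it. But `r3` ranks `h2` above `h4` and `h2` ranks `r3` above `r1`.
-/

instance {α : Type*} [DecidableEq α] (l : List α) (x : α) (o : Option α) :
    Decidable (prefersOver l x o) :=
  inferInstanceAs (Decidable (x ∈ l ∧ ∀ y ∈ o, l.idxOf x < l.idxOf y))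

instance {n : ℕ} (Lr Lh : Fin n → List (Fin n)) (mr mh : Fin n → Option (Fin n))
    (r h : Fin n) : Decidable (Blocking Lr Lh mr mh r h) :=
  inferInstanceAs (Decidable (_ ∧ _))

instance {n : ℕ} (Lr Lh : Fin n → List (Fin n)) (μ ν : Fin n → Fin n) :
    Decidable (StableTM Lr Lh μ ν) :=
  inferInstanceAs (Decidable (∀ _ _, ¬ (_ ∧ _)))

theorem Equiv.exists_perm_of_forall_apply_eq_iff {α : Type*} {μ ν : α → α}
    (h : ∀ a b, μ a = b ↔ ν b = a) : ∃ e : Equiv.Perm α, ⇑e = μ ∧ ⇑e.symm = ν :=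
  ⟨⟨μ, ν, fun a => (h a (μ a)).mp rfl, fun b => (h (ν b) b).mpr rfl⟩, rfl, rfl⟩

theorem daRun_eq_of_daStep_eq {n : ℕ} {Lp Lq : Fin n → List (Fin n)} {k : ℕ}
    (hfix : daStep n Lp Lq (daRun n Lp Lq k) = daRun n Lp Lq k) {m : ℕ} (hkm : k ≤ m) :
    daRun n Lp Lq m = daRun n Lp Lq k := by
  induction m, hkm using Nat.le_induction with
  | base => rfl
  | succ m _ ih => rw [daRun, ih, hfix]

/-- The window `L[ρ - η : ρ + η]` of radius `η` around rank `ρ` (ranks from `0`). Near the top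
of the list the truncated subtraction `ρ - η = 0` shortens the window instead of shifting it. -/
def window {α : Type*} (l : List α) (ρ η : ℕ) : List α :=
  (l.drop (ρ - η)).take (ρ + η + 1 - (ρ - η))

namespace WindowedDACounterexample

/-! Residents and hospitals `r1, …, r4` and `h1, …, h4` are `0, …, 3 : Fin 4`. -/

def residentPrefs : Fin 4 → List (Fin 4) :=
  ![[0, 3, 1, 2], [3, 2, 0, 1], [0, 2, 1, 3], [0, 3, 1, 2]]

def hospitalPrefs : Fin 4 → List (Fin 4) :=
  ![[1, 2, 0, 3], [2, 1, 0, 3], [3, 0, 2, 1], [2, 1, 3, 0]]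

def stableMatching : Equiv.Perm (Fin 4) where
  toFun := ![1, 3, 0, 2]
  invFun := ![2, 0, 3, 1]
  left_inv := by decide
  right_inv := by decide

theorem stableTM_stableMatching :
    StableTM residentPrefs hospitalPrefs stableMatching stableMatching.symm := by
  decide

set_option maxRecDepth 10000 in
theorem eq_stableMatching_of_stableTM (e : Equiv.Perm (Fin 4))
    (he : StableTM residentPrefs hospitalPrefs e e.symm) : e = stableMatching := by
  revert e
  decide

def hospitalWindows (h : Fin 4) : List (Fin 4) :=
  window (hospitalPrefs h) ((hospitalPrefs h).idxOf (stableMatching.symm h)) 1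

theorem daRun_hospitalWindows {m : ℕ} (hm : 5 ≤ m) :
    (daRun 4 hospitalWindows residentPrefs m).2 = ![some 1, some 0, some 3, some 2] := by
  have hfix : daStep 4 hospitalWindows residentPrefs (daRun 4 hospitalWindows residentPrefs 5) =
      daRun 4 hospitalWindows residentPrefs 5 := by
    decide
  rw [daRun_eq_of_daStep_eq hfix hm]
  decide

theorem blocking_daRun_hospitalWindows {m : ℕ} (hm : 5 ≤ m) :
    let held := (daRun 4 hospitalWindows residentPrefs m).2
    Blocking residentPrefs hospitalPrefs held (partnerOf 4 held) 2 1 := by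
  rw [daRun_hospitalWindows hm]
  decide

end WindowedDACounterexample

open WindowedDACounterexample in
/-- There is a 4×4 instance with a unique stable matching `μ` such that
hospital-proposing deferred acceptance, where each hospital proposes only within the
window of radius 1 around the rank of its `μ`-partner, outputs a matching admitting a
blocking pair in the original instance. -/
theorem hospital_proposing_window_DA_can_be_unstable :
    ∃ (Lr Lh : Fin 4 → List (Fin 4)) (μ ν : Fin 4 → Fin 4),
      (∀ r, (Lr r).Nodup) ∧ (∀ h, (Lh h).Nodup) ∧
      (∀ r h, h ∈ Lr r) ∧ (∀ h r, r ∈ Lh h) ∧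
      (∀ r h, μ r = h ↔ ν h = r) ∧
      StableTM Lr Lh μ ν ∧
      (∀ μ' ν' : Fin 4 → Fin 4, (∀ r h, μ' r = h ↔ ν' h = r) →
        StableTM Lr Lh μ' ν' → μ' = μ) ∧
      (let win : Fin 4 → List (Fin 4) := fun h =>
        ((Lh h).drop ((Lh h).idxOf (ν h) - 1)).take
          (((Lh h).idxOf (ν h) + 2) - ((Lh h).idxOf (ν h) - 1))
       -- hospitals propose (using their windows); residents receive and judge by `Lr`
       let held := (daRun 4 win Lr 100).2
       ∃ r h, Blocking Lr Lh held (partnerOf 4 held) r h) := by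
  refine ⟨residentPrefs, hospitalPrefs, stableMatching, stableMatching.symm,
    by decide, by decide, by decide, by decide,
    fun _ _ => (stableMatching.symm_apply_eq.trans eq_comm).symm,
    stableTM_stableMatching, ?_, ⟨2, 1, blocking_daRun_hospitalWindows (by norm_num)⟩⟩
  intro μ' ν' hinv hstable
  obtain ⟨e, rfl, rfl⟩ := Equiv.exists_perm_of_forall_apply_eq_iff hinv
  rw [eq_stableMatching_of_stableTM e hstable]
end

section
/- Proposer-optimality of deferred acceptance: In any stable matching instance, the resident-proposing deferred acceptance algorithm terminates and outputs a stable matching μ_R such that for every resident r and every stable matching μ, r weakly prefers μ_R(r) to μ(r). -/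
/-!
Each non-trivial step of deferred acceptance advances one proposal counter, and the counters are
bounded by the list lengths, so the run reaches a fixed point, at which every unmatched proposer
has exhausted its list. Receivers only trade up, so a receiver that has been proposed to holds
someone at least as good as each of its proposers; this rules out blocking pairs. For optimality,
fix a stable matching `μ`. No proposer is ever rejected by its `μ`-partner: at the first such
rejection, the receiver prefers the proposer it keeps, who in turn has never been rejected by its
own `μ`-partner and so prefers this receiver to it, a blocking pair for `μ`.
-/

theorem List.idxOf_lt_idxOf_of_le_of_ne {α : Type*} [BEq α] [LawfulBEq α] {l : List α}
    {a b : α} (ha : a ∈ l) (hle : l.idxOf a ≤ l.idxOf b) (hne : a ≠ b) :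
    l.idxOf a < l.idxOf b :=
  hle.lt_of_ne fun h => hne ((List.idxOf_inj ha).mp h)

theorem List.Nodup.idxOf_eq_iff_of_getElem? {α : Type*} [BEq α] [LawfulBEq α] {l : List α}
    (hl : l.Nodup) {i : ℕ} {a b : α} (hb : l[i]? = some b) (ha : a ∈ l) :
    l.idxOf a = i ↔ a = b := by
  constructor
  · rintro rfl
    simpa [List.getElem?_idxOf ha] using hb
  · rintro rfl
    obtain ⟨hi, rfl⟩ := List.getElem?_eq_some_iff.mp hb
    exact hl.idxOf_getElem i hi

section DeferredAcceptance

variable {n : ℕ} {Lp Lq : Fin n → List (Fin n)}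
  {s : (Fin n → ℕ) × (Fin n → Option (Fin n))}

def HasProposed (Lp : Fin n → List (Fin n)) (next : Fin n → ℕ) (p q : Fin n) : Prop :=
  q ∈ Lp p ∧ (Lp p).idxOf q < next p

theorem hasProposed_update_iff {next : Fin n → ℕ} {p q p' q' : Fin n} (hp : (Lp p).Nodup)
    (hq : (Lp p)[next p]? = some q) :
    HasProposed Lp (Function.update next p (next p + 1)) p' q' ↔
      HasProposed Lp next p' q' ∨ p' = p ∧ q' = q := by
  by_cases hp' : p' = p
  · subst hp'
    have hqmem : q ∈ Lp p' := List.mem_of_getElem? hq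
    have hidx := fun hmem => hp.idxOf_eq_iff_of_getElem? hq (a := q') hmem
    simp only [HasProposed, Function.update_self, Nat.lt_succ_iff_lt_or_eq, true_and]
    grind
  · simp [HasProposed, hp']

/-- `p` proposes to `q`, which then holds `w`, the better of `p` and its previous partner. -/
structure ProposalStep (Lp Lq : Fin n → List (Fin n))
    (s : (Fin n → ℕ) × (Fin n → Option (Fin n))) (p q w : Fin n) : Prop where
  unmatched : ∀ q', s.2 q' ≠ some p
  getElem?_next : (Lp p)[s.1 p]? = some q
  winner_eq : w = p ∨ s.2 q = some w
  winner_le_proposer : (Lq q).idxOf w ≤ (Lq q).idxOf p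
  winner_le_held : ∀ p', s.2 q = some p' → (Lq q).idxOf w ≤ (Lq q).idxOf p'

theorem daStep_cases :
    (daStep n Lp Lq s = s ∧ ∀ p, (∀ q, s.2 q ≠ some p) → (Lp p).length ≤ s.1 p) ∨
    ∃ p q w, ProposalStep Lp Lq s p q w ∧
      daStep n Lp Lq s = (Function.update s.1 p (s.1 p + 1), Function.update s.2 q (some w)) := by
  unfold daStep
  split
  next hnone =>
    refine .inl ⟨rfl, fun p hp => ?_⟩
    simpa [hp] using List.find?_eq_none.mp hnone p (List.mem_finRange p)
  next p hp =>
    obtain ⟨hun, hlt⟩ := by simpa using List.find?_some hp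
    split
    next hget => simp [List.getElem?_eq_getElem hlt] at hget
    next q hget =>
      right
      split
      next hq => exact ⟨p, q, p, ⟨hun, hget, .inl rfl, le_rfl, by simp [hq]⟩, rfl⟩
      next p' hq =>
        split
        next hcmp =>
          exact ⟨p, q, p, ⟨hun, hget, .inl rfl, le_rfl, by simp [hq, hcmp.le]⟩, rfl⟩
        next hcmp =>
          refine ⟨p, q, p', ⟨hun, hget, .inr hq, not_lt.mp hcmp, by simp [hq]⟩, ?_⟩
          rw [← hq, Function.update_eq_self]

structure DAInvariant (Lp Lq : Fin n → List (Fin n))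
    (s : (Fin n → ℕ) × (Fin n → Option (Fin n))) : Prop where
  next_le_length : ∀ p, s.1 p ≤ (Lp p).length
  hasProposed_of_held : ∀ q p, s.2 q = some p → HasProposed Lp s.1 p q
  held_inj : ∀ q q' p, s.2 q = some p → s.2 q' = some p → q = q'
  held_le_of_hasProposed : ∀ p q, HasProposed Lp s.1 p q →
    ∃ p', s.2 q = some p' ∧ (Lq q).idxOf p' ≤ (Lq q).idxOf p

theorem DAInvariant.propose {p q w : Fin n} (hs : DAInvariant Lp Lq s) (hp : (Lp p).Nodup)
    (h : ProposalStep Lp Lq s p q w) :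
    DAInvariant Lp Lq (Function.update s.1 p (s.1 p + 1), Function.update s.2 q (some w)) where
  next_le_length p' := by
    rcases eq_or_ne p' p with rfl | hp'
    · simpa using (List.getElem?_eq_some_iff.mp h.getElem?_next).1
    · simpa [hp'] using hs.next_le_length p'
  hasProposed_of_held q' p' hq' := by
    refine (hasProposed_update_iff hp h.getElem?_next).mpr ?_
    rcases eq_or_ne q' q with rfl | hne
    · obtain rfl : w = p' := by simpa using hq'
      exact h.winner_eq.imp (fun hw => ⟨hw, rfl⟩) (hs.hasProposed_of_held q' w) |>.symm
    · exact .inl (hs.hasProposed_of_held q' p' (by simpa [hne] using hq'))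
  held_inj q₁ q₂ p' h₁ h₂ := by
    have hw : ∀ q', q' ≠ q → s.2 q' ≠ some w := fun q' hq' hw =>
      h.winner_eq.elim (fun hwp => h.unmatched q' (hwp ▸ hw))
        (fun hqw => hq' (hs.held_inj q' q w hw hqw))
    have hinj := hs.held_inj q₁ q₂ p'
    simp only [Function.update_apply] at h₁ h₂
    split_ifs at h₁ h₂ <;> grind
  held_le_of_hasProposed p' q' hpro := by
    rcases (hasProposed_update_iff hp h.getElem?_next).mp hpro with hold | ⟨rfl, rfl⟩
    · obtain ⟨p'', hp'', hle⟩ := hs.held_le_of_hasProposed p' q' hold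
      rcases eq_or_ne q' q with rfl | hne
      · exact ⟨w, by simp, (h.winner_le_held p'' hp'').trans hle⟩
      · exact ⟨p'', by simpa [hne] using hp'', hle⟩
    · exact ⟨w, by simp, h.winner_le_proposer⟩

theorem DAInvariant.step (hs : DAInvariant Lp Lq s) (hN : ∀ p, (Lp p).Nodup) :
    DAInvariant Lp Lq (daStep n Lp Lq s) := by
  rcases daStep_cases (Lq := Lq) (s := s) with ⟨heq, -⟩ | ⟨p, q, w, h, heq⟩
  · rwa [heq]
  · rw [heq]
    exact hs.propose (hN p) h

theorem daInvariant_daRun (hN : ∀ p, (Lp p).Nodup) (k : ℕ) :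
    DAInvariant Lp Lq (daRun n Lp Lq k) := by
  induction k with
  | zero =>
    exact ⟨fun _ => Nat.zero_le _, by simp [daRun], by simp [daRun],
      by simp [daRun, HasProposed]⟩
  | succ k ih => exact ih.step hN

theorem sum_next_daStep_of_ne (hne : daStep n Lp Lq s ≠ s) :
    ∑ p, (daStep n Lp Lq s).1 p = ∑ p, s.1 p + 1 := by
  rcases daStep_cases (Lq := Lq) (s := s) with ⟨heq, -⟩ | ⟨p, q, w, -, heq⟩
  · exact absurd heq hne
  · rw [heq, Finset.sum_update_of_mem (Finset.mem_univ p),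
      ← Finset.add_sum_erase _ _ (Finset.mem_univ p), Finset.sdiff_singleton_eq_erase]
    ring

theorem daStep_daRun_eq_self_or_le_sum (k : ℕ) :
    daStep n Lp Lq (daRun n Lp Lq k) = daRun n Lp Lq k ∨ k ≤ ∑ p, (daRun n Lp Lq k).1 p := by
  induction k with
  | zero => exact .inr (Nat.zero_le _)
  | succ k ih =>
    by_cases hfix : daStep n Lp Lq (daRun n Lp Lq k) = daRun n Lp Lq k
    · left
      simp only [daRun, hfix]
    · right
      rw [daRun, sum_next_daStep_of_ne hfix]
      exact Nat.succ_le_succ (ih.resolve_left hfix)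

theorem daStep_daRun_eq_self (hN : ∀ p, (Lp p).Nodup) {k : ℕ} (hk : ∑ p, (Lp p).length < k) :
    daStep n Lp Lq (daRun n Lp Lq k) = daRun n Lp Lq k :=
  (daStep_daRun_eq_self_or_le_sum k).resolve_right fun hle =>
    (hk.trans_le hle).not_ge
      (Finset.sum_le_sum fun p _ => (daInvariant_daRun hN k).next_le_length p)

theorem length_le_next_of_daStep_eq_self (hfix : daStep n Lp Lq s = s) {p : Fin n}
    (hp : ∀ q, s.2 q ≠ some p) : (Lp p).length ≤ s.1 p := by
  rcases daStep_cases (Lq := Lq) (s := s) with ⟨-, hex⟩ | ⟨p', q, w, -, heq⟩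
  · exact hex p hp
  · have := congrFun (congrArg Prod.fst (heq.symm.trans hfix)) p'
    simp at this

theorem partnerOf_eq_none_iff {held : Fin n → Option (Fin n)} {p : Fin n} :
    partnerOf n held p = none ↔ ∀ q, held q ≠ some p := by
  simp [partnerOf, List.find?_eq_none]

theorem partnerOf_eq_some_iff {held : Fin n → Option (Fin n)} {p q : Fin n}
    (hinj : ∀ q q' p, held q = some p → held q' = some p → q = q') :
    partnerOf n held p = some q ↔ held q = some p := by
  refine ⟨fun h => by simpa using List.find?_some h, fun hq => ?_⟩
  obtain ⟨q', hq'⟩ := Option.ne_none_iff_exists'.mp fun h => partnerOf_eq_none_iff.mp h q hq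
  have hq'p : held q' = some p := by simpa using List.find?_some hq'
  rwa [hinj q q' p hq hq'p]

theorem hasProposed_of_prefersOver (hs : DAInvariant Lp Lq s) (hfix : daStep n Lp Lq s = s)
    {p q : Fin n} (h : prefersOver (Lp p) q (partnerOf n s.2 p)) : HasProposed Lp s.1 p q := by
  refine ⟨h.1, ?_⟩
  cases hpart : partnerOf n s.2 p with
  | none =>
    exact (List.idxOf_lt_length_iff.mpr h.1).trans_le
      (length_le_next_of_daStep_eq_self hfix (partnerOf_eq_none_iff.mp hpart))
  | some x =>
    exact (h.2 x hpart).trans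
      (hs.hasProposed_of_held x p ((partnerOf_eq_some_iff hs.held_inj).mp hpart)).2

structure IsStableMatching (Lp Lq : Fin n → List (Fin n)) (μp μq : Fin n → Option (Fin n)) :
    Prop where
  partner_iff : ∀ p q, μp p = some q ↔ μq q = some p
  acceptable : ∀ p q, μp p = some q → q ∈ Lp p
  not_blocking : ∀ p q, ¬ Blocking Lp Lq μp μq p q

theorem IsStableMatching.false_of_weakly_blocking {μp μq : Fin n → Option (Fin n)}
    (hμ : IsStableMatching Lp Lq μp μq) {p q p' : Fin n} (hq : q ∈ Lp p) (hp : p ∈ Lq q)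
    (hp' : μq q = some p') (hne : p ≠ p') (hqp : (Lq q).idxOf p ≤ (Lq q).idxOf p')
    (hpq : ∀ q', μp p = some q' → (Lp p).idxOf q ≤ (Lp p).idxOf q') : False := by
  refine hμ.not_blocking p q ⟨⟨hq, fun q' hq' => ?_⟩, ⟨hp, fun p'' hp'' => ?_⟩⟩
  · refine List.idxOf_lt_idxOf_of_le_of_ne hq (hpq q' hq') fun hqq' => hne ?_
    subst hqq'
    exact Option.some.inj (((hμ.partner_iff p q).mp hq').symm.trans hp')
  · obtain rfl : p'' = p' := Option.some.inj (hp''.symm.trans hp')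
    exact List.idxOf_lt_idxOf_of_le_of_ne hp hqp hne

def StablePartnersHeld (Lp : Fin n → List (Fin n)) (μp : Fin n → Option (Fin n))
    (s : (Fin n → ℕ) × (Fin n → Option (Fin n))) : Prop :=
  ∀ p q, μp p = some q → HasProposed Lp s.1 p q → s.2 q = some p

theorem StablePartnersHeld.idxOf_le_stablePartner {μp μq : Fin n → Option (Fin n)}
    (hμ : IsStableMatching Lp Lq μp μq) (hμs : StablePartnersHeld Lp μp s) {p q : Fin n}
    (hq : (Lp p).idxOf q ≤ s.1 p) (hheld : ∀ q', s.2 q' = some p → q' = q) :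
    ∀ q', μp p = some q' → (Lp p).idxOf q ≤ (Lp p).idxOf q' := by
  intro q' hq'
  by_contra! hlt
  obtain rfl := hheld q' (hμs p q' hq' ⟨hμ.acceptable p q' hq', hlt.trans_le hq⟩)
  exact lt_irrefl _ hlt

theorem StablePartnersHeld.propose {μp μq : Fin n → Option (Fin n)}
    (hμ : IsStableMatching Lp Lq μp μq) (hcons : ∀ p q, q ∈ Lp p ↔ p ∈ Lq q)
    (hs : DAInvariant Lp Lq s) (hμs : StablePartnersHeld Lp μp s) {p q w : Fin n}
    (hp : (Lp p).Nodup) (h : ProposalStep Lp Lq s p q w) :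
    StablePartnersHeld Lp μp
      (Function.update s.1 p (s.1 p + 1), Function.update s.2 q (some w)) := by
  have hq : q ∈ Lp p := List.mem_of_getElem? h.getElem?_next
  have hidx : (Lp p).idxOf q = s.1 p :=
    (hp.idxOf_eq_iff_of_getElem? h.getElem?_next hq).mpr rfl
  intro r q' hr hpro
  rcases (hasProposed_update_iff hp h.getElem?_next).mp hpro with hold | ⟨rfl, rfl⟩
  · have hheld := hμs r q' hr hold
    rcases eq_or_ne q' q with rfl | hne
    · simp only [Function.update_self]
      rcases h.winner_eq with rfl | hw
      · exact (hμ.false_of_weakly_blocking hq ((hcons _ _).mp hq)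
          ((hμ.partner_iff r q').mp hr) (fun hwr => h.unmatched q' (hwr ▸ hheld))
          (h.winner_le_held r hheld)
          (hμs.idxOf_le_stablePartner hμ hidx.le fun q'' hq'' =>
            (h.unmatched q'' hq'').elim)).elim
      · rw [← hw, hheld]
    · simpa [hne] using hheld
  · simp only [Function.update_self]
    rcases h.winner_eq with rfl | hw
    · rfl
    · have hwq := hs.hasProposed_of_held q' w hw
      exact (hμ.false_of_weakly_blocking hwq.1 ((hcons _ _).mp hwq.1)
        ((hμ.partner_iff _ _).mp hr) (fun hwp => h.unmatched q' (hwp ▸ hw)) h.winner_le_proposer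
        (hμs.idxOf_le_stablePartner hμ hwq.2.le fun q'' hq'' =>
          hs.held_inj q'' q' w hq'' hw)).elim

theorem stablePartnersHeld_daRun {μp μq : Fin n → Option (Fin n)}
    (hμ : IsStableMatching Lp Lq μp μq) (hN : ∀ p, (Lp p).Nodup)
    (hcons : ∀ p q, q ∈ Lp p ↔ p ∈ Lq q) (k : ℕ) :
    StablePartnersHeld Lp μp (daRun n Lp Lq k) := by
  induction k with
  | zero => simp [StablePartnersHeld, daRun, HasProposed]
  | succ k ih =>
    rcases daStep_cases (Lq := Lq) (s := daRun n Lp Lq k) with ⟨heq, -⟩ | ⟨p, q, w, h, heq⟩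
    · rwa [daRun, heq]
    · rw [daRun, heq]
      exact ih.propose hμ hcons (daInvariant_daRun hN k) (hN p) h

end DeferredAcceptance

theorem deferred_acceptance_proposer_optimal_general
    (n : ℕ) (Lr Lh : Fin n → List (Fin n))
    (hNr : ∀ r, (Lr r).Nodup)
    (hcons : ∀ r h, h ∈ Lr r ↔ r ∈ Lh h) :
    let s := daRun n Lr Lh ((∑ r : Fin n, (Lr r).length) + 1)
    daStep n Lr Lh s = s ∧
    (∀ h r, s.2 h = some r → r ∈ Lh h) ∧
    (∀ r h, ¬ Blocking Lr Lh (partnerOf n s.2) s.2 r h) ∧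
    (∀ μr μh : Fin n → Option (Fin n),
      (∀ r h, μr r = some h ↔ μh h = some r) →
      (∀ r h, μr r = some h → h ∈ Lr r) →
      (∀ r h, ¬ Blocking Lr Lh μr μh r h) →
      ∀ r, weaklyPrefers (Lr r) (partnerOf n s.2 r) (μr r)) := by
  intro s
  have hs : DAInvariant Lr Lh s := daInvariant_daRun hNr _
  have hfix : daStep n Lr Lh s = s := daStep_daRun_eq_self hNr (Nat.lt_succ_self _)
  refine ⟨hfix, fun h r hh => (hcons r h).mp (hs.hasProposed_of_held h r hh).1, ?_, ?_⟩
  · rintro r h ⟨hr, hh⟩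
    obtain ⟨r', hr', hle⟩ :=
      hs.held_le_of_hasProposed r h (hasProposed_of_prefersOver hs hfix hr)
    exact (hh.2 r' hr').not_ge hle
  · intro μr μh hμ hμdom hstab r h hh
    by_contra! hworse
    have hμs : StablePartnersHeld Lr μr s :=
      stablePartnersHeld_daRun ⟨hμ, hμdom, hstab⟩ hNr hcons _
    have hheld := hμs r h hh (hasProposed_of_prefersOver hs hfix ⟨hμdom r h hh, hworse⟩)
    exact (hworse h ((partnerOf_eq_some_iff hs.held_inj).mpr hheld)).false

/-- **Proposer-optimality of deferred acceptance.** With enough fuel,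
resident-proposing deferred acceptance terminates (the state is a fixed point), outputs a
stable matching, and every resident weakly prefers its output partner to its partner in
any stable matching. -/
theorem deferred_acceptance_proposer_optimal
    (n : ℕ) (Lr Lh : Fin n → List (Fin n))
    (hNr : ∀ r, (Lr r).Nodup) (hNh : ∀ h, (Lh h).Nodup)
    (hcons : ∀ r h, h ∈ Lr r ↔ r ∈ Lh h) :
    let s := daRun n Lr Lh ((∑ r : Fin n, (Lr r).length) + 1)
    daStep n Lr Lh s = s ∧
    (∀ h r, s.2 h = some r → r ∈ Lh h) ∧
    (∀ r h, ¬ Blocking Lr Lh (partnerOf n s.2) s.2 r h) ∧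
    (∀ μr μh : Fin n → Option (Fin n),
      (∀ r h, μr r = some h ↔ μh h = some r) →
      (∀ r h, μr r = some h → h ∈ Lr r) →
      (∀ r h, ¬ Blocking Lr Lh μr μh r h) →
      ∀ r, weaklyPrefers (Lr r) (partnerOf n s.2 r) (μr r)) :=
  deferred_acceptance_proposer_optimal_general n Lr Lh hNr hcons
end

section
/- Receiver-pessimality of deferred acceptance: In any stable matching instance, the resident-proposing deferred acceptance algorithm outputs the hospital-pessimal stable matching: for every hospital h and every stable matching μ, h weakly prefers μ(h) to μ_R(h), where μ_R is the resident-optimal stable matching. -/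
variable {R H : Type*} [DecidableEq R] [DecidableEq H]

/-!
If `μR` matches `r` with `h` but `μ` does not, then by resident-optimality `r` strictly
prefers `h` to its partner in `μ`; since `(r, h)` does not block `μ`, the hospital `h` must
be matched in `μ` to someone it ranks at least as high as `r`.
-/

theorem prefersOver_of_weaklyPrefers_some {α : Type*} [DecidableEq α] {l : List α} {x : α}
    {o : Option α} (hx : x ∈ l) (hw : weaklyPrefers l (some x) o) (hne : o ≠ some x) :
    prefersOver l x o := by
  refine ⟨hx, fun y hy => ?_⟩
  obtain ⟨x', hx', hle⟩ := hw y hy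
  cases Option.some_injective _ hx'
  refine lt_of_le_of_ne hle fun heq => hne ?_
  rw [hy, (List.idxOf_inj hx).1 heq]

theorem weaklyPrefers_some_of_not_prefersOver {α : Type*} [DecidableEq α] {l : List α} {x : α}
    {o : Option α} (hx : x ∈ l) (hn : ¬ prefersOver l x o) : weaklyPrefers l o (some x) := by
  rintro y ⟨⟩
  simpa only [prefersOver, hx, true_and, not_forall, not_lt, exists_prop] using hn

theorem SMInstance.IsStable.weaklyPrefers_of_prefersOver {I : SMInstance R H}
    {μ : SMatching R H} (hμ : I.IsStable μ) {r : R} {h : H}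
    (hrh : prefersOver (I.Lr r) h (μ.mr r)) (hr : r ∈ I.Lh h) :
    weaklyPrefers (I.Lh h) (μ.mh h) (some r) :=
  weaklyPrefers_some_of_not_prefersOver hr fun hhr => hμ.2 r h ⟨hrh, hhr⟩

theorem resident_optimal_is_hospital_pessimal_general
    {R H : Type*} [DecidableEq R] [DecidableEq H]
    (I : SMInstance R H)
    (μR : SMatching R H) (hstab : I.IsStable μR)
    (hopt : ∀ ν : SMatching R H, I.IsStable ν →
      ∀ r, weaklyPrefers (I.Lr r) (μR.mr r) (ν.mr r))
    (μ : SMatching R H) (hμ : I.IsStable μ) (h : H) :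
    weaklyPrefers (I.Lh h) (μ.mh h) (μR.mh h) := by
  rintro r hr
  have hrh : μR.mr r = some h := (μR.consistent r h).2 hr
  by_cases hμrh : μ.mr r = some h
  · exact ⟨r, (μ.consistent r h).1 hμrh, le_rfl⟩
  have hpref : prefersOver (I.Lr r) h (μ.mr r) :=
    prefersOver_of_weaklyPrefers_some (hstab.1.1 r h hrh) (hrh ▸ hopt μ hμ r) hμrh
  exact hμ.weaklyPrefers_of_prefersOver hpref (hstab.1.2 h r hr) r rfl

/-- **Receiver-pessimality.** If `μR` is the resident-optimal stable
matching, then for every hospital `h` and every stable matching `μ`, `h` weakly prefers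
`μ(h)` to `μR(h)`. -/
theorem resident_optimal_is_hospital_pessimal
    {R H : Type*} [DecidableEq R] [DecidableEq H] [Fintype R] [Fintype H]
    (I : SMInstance R H) (hN : I.Nodups)
    (μR : SMatching R H) (hstab : I.IsStable μR)
    (hopt : ∀ ν : SMatching R H, I.IsStable ν →
      ∀ r, weaklyPrefers (I.Lr r) (μR.mr r) (ν.mr r))
    (μ : SMatching R H) (hμ : I.IsStable μ) (h : H) :
    weaklyPrefers (I.Lh h) (μ.mh h) (μR.mh h) :=
  resident_optimal_is_hospital_pessimal_general I μR hstab hopt μ hμ h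
end

section
/- Closest-stable-matching characterization: Let Î be the prefix-truncated instance and suppose its set M of stable matchings is nonempty and contained in the set of stable matchings of I. Then the resident-optimal stable matching μ̂ of Î attains the minimum of Σ_h [ρ_h − rank(L̂(h), M(h))] over all M ∈ M. -/
variable {R H : Type*} [DecidableEq R] [DecidableEq H]

/-- The rank (1-based) of an optional partner on a list; `0` if unmatched. -/
def orank {α : Type*} [DecidableEq α] (l : List α) : Option α → ℤ
  | none => 0
  | some a => l.idxOf a + 1


/-!
Resident optimality in `Ihat` forces hospital pessimality: if some hospital `h` strictly preferred
its partner `r` in `muHat` to its partner in a stable `ν`, then `r`, who weakly prefers `muHat`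
and is not matched to `h` in `ν`, would form a blocking pair `(r, h)` for `ν`. Since every stable
matching of `Ihat` is stable in the complete, balanced instance `I`, every hospital is matched in
both, so `muHat` gives each hospital its worst rank and minimizes every summand separately.
-/

namespace SMInstance

theorem IsStable.exists_mr_or_exists_mh {I : SMInstance R H} {μ : SMatching R H}
    (hC : I.Complete) (hμ : I.IsStable μ) (r : R) (h : H) :
    (∃ h', μ.mr r = some h') ∨ ∃ r', μ.mh h = some r' := by
  by_contra! ⟨hr, hh⟩
  exact hμ.2 r h
    ⟨⟨hC.1 r h, fun y hy => absurd hy (hr y)⟩, ⟨hC.2 h r, fun y hy => absurd hy (hh y)⟩⟩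

/-- If a hospital were unmatched, completeness would match every resident, and the resulting
injection of residents into hospitals would be onto. -/
theorem IsStable.exists_mh [Finite H] {I : SMInstance R H} {μ : SMatching R H}
    (hC : I.Complete) (hcard : Nat.card H ≤ Nat.card R) (hμ : I.IsStable μ) (h : H) :
    ∃ r, μ.mh h = some r := by
  by_contra! hh
  have hmatched (r : R) : ∃ h', μ.mr r = some h' :=
    (hμ.exists_mr_or_exists_mh hC r h).resolve_right fun ⟨r', hr'⟩ => hh r' hr'
  choose f hf using hmatched
  have hf_inj : Function.Injective f := fun r₁ r₂ he => by
    have h₁ := (μ.consistent r₁ (f r₁)).mp (hf r₁)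
    have h₂ := (μ.consistent r₂ (f r₂)).mp (hf r₂)
    rw [he, h₂] at h₁
    exact (Option.some_inj.mp h₁).symm
  obtain ⟨r, hr⟩ := (hf_inj.bijective_of_nat_card_le hcard).2 h
  exact hh r ((μ.consistent r h).mp (hr ▸ hf r))

theorem idxOf_mh_le_of_weaklyPrefers {J : SMInstance R H} {μ ν : SMatching R H}
    (hμ : J.ExistsIn μ) (hν : J.IsStable ν)
    (hdom : ∀ r, weaklyPrefers (J.Lr r) (μ.mr r) (ν.mr r))
    {h : H} {r r' : R} (hr : μ.mh h = some r) (hr' : ν.mh h = some r') :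
    (J.Lh h).idxOf r' ≤ (J.Lh h).idxOf r := by
  by_contra! hlt
  have hμr : μ.mr r = some h := (μ.consistent r h).mpr hr
  have hhr : h ∈ J.Lr r := hμ.1 r h hμr
  refine hν.2 r h ⟨⟨hhr, fun y hy => ?_⟩, ⟨hμ.2 h r hr, fun y hy => ?_⟩⟩
  · obtain ⟨x, hx, hxy⟩ := hdom r y hy
    rw [hμr, Option.some_inj] at hx
    subst hx
    have hyh : y ≠ h := fun hyh => by
      have hrr' : r' = r := Option.some_inj.mp (hr' ▸ (ν.consistent r h).mp (hyh ▸ hy))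
      exact hlt.ne (by rw [hrr'])
    exact hxy.lt_of_ne fun he => hyh ((List.idxOf_inj hhr).mp he).symm
  · rw [hr', Option.some_inj] at hy
    rwa [← hy]

end SMInstance

theorem PDA_outputs_closest_stable_matching_general
    {R H : Type*} [DecidableEq R] [DecidableEq H] [Fintype R] [Fintype H]
    (hcard : Fintype.card R = Fintype.card H)
    (I Ihat : SMInstance R H) (hC : I.Complete)
    (ρ : H → ℕ)
    (hsub : ∀ ν : SMatching R H, Ihat.IsStable ν → I.IsStable ν)
    (muHat : SMatching R H) (hhat : Ihat.IsStable muHat)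
    (hropt : ∀ ν : SMatching R H, Ihat.IsStable ν →
      ∀ r, weaklyPrefers (Ihat.Lr r) (muHat.mr r) (ν.mr r)) :
    ∀ ν : SMatching R H, Ihat.IsStable ν →
      ∑ h : H, ((ρ h : ℤ) - orank (Ihat.Lh h) (muHat.mh h)) ≤
      ∑ h : H, ((ρ h : ℤ) - orank (Ihat.Lh h) (ν.mh h)) := by
  intro ν hν
  have hcard' : Nat.card H ≤ Nat.card R := by
    simp only [Nat.card_eq_fintype_card, hcard, le_refl]
  refine Finset.sum_le_sum fun h _ => ?_
  obtain ⟨r, hr⟩ := (hsub muHat hhat).exists_mh hC hcard' h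
  obtain ⟨r', hr'⟩ := (hsub ν hν).exists_mh hC hcard' h
  have hle := SMInstance.idxOf_mh_le_of_weaklyPrefers hhat.1 hν (hropt ν hν) hr hr'
  simp only [hr, hr', orank]
  omega

/-- **Closest stable matching.** If every stable matching of the
prefix-truncated instance `Ihat` is stable in `I`, then the resident-optimal stable matching
`muHat` of `Ihat` minimizes `Σ_h (ρ_h − rank(L̂(h), M(h)))` over all stable matchings `M`
of `Ihat`. -/
theorem PDA_outputs_closest_stable_matching
    {R H : Type*} [DecidableEq R] [DecidableEq H] [Fintype R] [Fintype H]
    (hcard : Fintype.card R = Fintype.card H)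
    (I Ihat : SMInstance R H) (hC : I.Complete) (hN : I.Nodups)
    (ρ : H → ℕ)
    (hLh : ∀ h, Ihat.Lh h = (I.Lh h).take (ρ h))
    (hLr : ∀ r, Ihat.Lr r = (I.Lr r).filter (fun h => decide (r ∈ Ihat.Lh h)))
    (hsub : ∀ ν : SMatching R H, Ihat.IsStable ν → I.IsStable ν)
    (muHat : SMatching R H) (hhat : Ihat.IsStable muHat)
    (hropt : ∀ ν : SMatching R H, Ihat.IsStable ν →
      ∀ r, weaklyPrefers (Ihat.Lr r) (muHat.mr r) (ν.mr r)) :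
    ∀ ν : SMatching R H, Ihat.IsStable ν →
      ∑ h : H, ((ρ h : ℤ) - orank (Ihat.Lh h) (muHat.mh h)) ≤
      ∑ h : H, ((ρ h : ℤ) - orank (Ihat.Lh h) (ν.mh h)) :=
  PDA_outputs_closest_stable_matching_general hcard I Ihat hC ρ hsub muHat hhat hropt
end

section
/- Monotonicity of tentative matches in deferred acceptance: During any execution of resident-proposing deferred acceptance, the tentative partner of each hospital weakly improves over time (with respect to that hospital's preference list), and the hospital proposed to by each resident weakly worsens over time. -/
section WeaklyPrefers

variable {α : Type*} [DecidableEq α] (l : List α)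

theorem weaklyPrefers_refl (o : Option α) : weaklyPrefers l o o :=
  fun y hy => ⟨y, hy, le_rfl⟩

theorem weaklyPrefers_trans {o₁ o₂ o₃ : Option α} (h₁₂ : weaklyPrefers l o₁ o₂)
    (h₂₃ : weaklyPrefers l o₂ o₃) : weaklyPrefers l o₁ o₃ := by
  intro y hy
  obtain ⟨x, hx, hxy⟩ := h₂₃ y hy
  obtain ⟨w, hw, hwx⟩ := h₁₂ x hx
  exact ⟨w, hw, hwx.trans hxy⟩

theorem weaklyPrefers_some_none (x : α) : weaklyPrefers l (some x) none :=
  fun _ hy => by cases hy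

theorem weaklyPrefers_some_some {x y : α} (hxy : l.idxOf x ≤ l.idxOf y) :
    weaklyPrefers l (some x) (some y) :=
  fun _ hy => ⟨x, rfl, Option.some_injective _ hy ▸ hxy⟩

theorem weaklyPrefers_update {β : Type*} [DecidableEq β] {L : β → List α}
    {held : β → Option α} {p : α} {q : β}
    (hp : weaklyPrefers (L q) (some p) (held q)) (h : β) :
    weaklyPrefers (L h) (Function.update held q (some p) h) (held h) := by
  rcases eq_or_ne h q with rfl | hh
  · simpa using hp
  · simpa [Function.update_of_ne hh] using weaklyPrefers_refl _ _

end WeaklyPrefers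

namespace DeferredAcceptance

variable {n : ℕ} (Lp Lq : Fin n → List (Fin n))

/-- Progress order on states: every proposer has moved weakly down its list and every
receiver holds a weakly better proposer. -/
def StateLE (s t : (Fin n → ℕ) × (Fin n → Option (Fin n))) : Prop :=
  s.1 ≤ t.1 ∧ ∀ q, weaklyPrefers (Lq q) (t.2 q) (s.2 q)

instance : Std.Refl (StateLE Lq) :=
  ⟨fun _ => ⟨le_rfl, fun _ => weaklyPrefers_refl _ _⟩⟩

instance : IsTrans _ (StateLE Lq) :=
  ⟨fun _ _ _ hst htu =>
    ⟨hst.1.trans htu.1, fun q => weaklyPrefers_trans _ (htu.2 q) (hst.2 q)⟩⟩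

theorem stateLE_advance {s : (Fin n → ℕ) × (Fin n → Option (Fin n))} {p : Fin n}
    {held : Fin n → Option (Fin n)} (hheld : ∀ q, weaklyPrefers (Lq q) (held q) (s.2 q)) :
    StateLE Lq s (Function.update s.1 p (s.1 p + 1), held) := by
  refine ⟨fun r => ?_, hheld⟩
  rcases eq_or_ne r p with rfl | hr
  · simp
  · simp [Function.update_of_ne hr]

theorem stateLE_daStep (s : (Fin n → ℕ) × (Fin n → Option (Fin n))) :
    StateLE Lq s (daStep n Lp Lq s) := by
  unfold daStep
  split
  · exact refl s
  split
  · exact refl s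
  split
  case h_1 _ p _ _ q _ _ hq =>
    exact stateLE_advance Lq (weaklyPrefers_update (hq ▸ weaklyPrefers_some_none _ p))
  case h_2 _ p _ _ q _ _ _ hq =>
    split_ifs with hbetter
    · exact stateLE_advance Lq
        (weaklyPrefers_update (hq ▸ weaklyPrefers_some_some _ hbetter.le))
    · exact stateLE_advance Lq fun _ => weaklyPrefers_refl _ _

end DeferredAcceptance

/-- **Monotonicity of deferred acceptance.** Along any execution of
resident-proposing deferred acceptance, each proposer moves weakly down its own list
(the hospital it proposes to weakly worsens), and each receiver's tentative partner
weakly improves (and a receiver that holds a proposer never becomes unmatched). -/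
theorem deferred_acceptance_monotone
    (n : ℕ) (Lr Lh : Fin n → List (Fin n)) :
    ∀ k l : ℕ, k ≤ l →
      (∀ r, (daRun n Lr Lh k).1 r ≤ (daRun n Lr Lh l).1 r) ∧
      (∀ h r, (daRun n Lr Lh k).2 h = some r →
        ∃ r', (daRun n Lr Lh l).2 h = some r' ∧
          (Lh h).idxOf r' ≤ (Lh h).idxOf r) := by
  intro k l hkl
  exact Nat.rel_of_forall_rel_succ_of_le (DeferredAcceptance.StateLE Lh)
    (fun m => DeferredAcceptance.stateLE_daStep Lr Lh (daRun n Lr Lh m)) hkl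
end

section
/- In the lower-bound construction from disjointness, if the sets A and B are disjoint then the predicted matching μ̂ (matching same-index agents within each block) is stable in the constructed instance. -/
/-!
Under `μ̂` every padding agent holds its first choice, and the two backup agents hold their last
choices but every `S`-agent prefers its own partner to them. So a blocking pair must
consist of an `S`-hospital `i` and an `S`-resident `j` with `(i, j) ∈ A`. Resident `j` ranks
hospital `i` above its own partner only if `(i, j) ∈ B`, which disjointness rules out.
-/

/-- Agents (on either side) of the lower-bound construction: a block `S` of size `m`
encoding the disjointness instance, padding blocks `Pu`, `Pl` of size `η`, and a
single backup agent `B`. -/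
inductive Agent (m η : ℕ) : Type
  | S : Fin m → Agent m η
  | Pu : Fin η → Agent m η
  | Pl : Fin η → Agent m η
  | B : Agent m η
  deriving DecidableEq, Fintype

variable {m η : ℕ}

/-- An injective enumeration of the agents. -/
def Agent.enum : Agent m η → ℕ
  | .S j => j.val
  | .Pu j => m + j.val
  | .Pl j => m + η + j.val
  | .B => m + 2 * η

/-- Tier width used to build preference keys. -/
def tierWidth (m η : ℕ) : ℕ := m + 2 * η + 2

/-- Preference key of the `i`-th `S`-side agent over agents of the other side, where
`mem i j` says that the pair `(i, j)` (self index `i`, other index `j`) is in the set: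
first the `mem`-partners, then `Pu`, then the same-index agent, then `B`, then `Pl`,
then all remaining `S`-agents.  Smaller key means more preferred. -/
def sKey (m η : ℕ) (mem : Fin m → Fin m → Bool) (i : Fin m) : Agent m η → ℕ
  | .S j => (if j = i then 2 else if mem i j then 0 else 5) * tierWidth m η + j.val
  | .Pu j => 1 * tierWidth m η + j.val
  | .B => 3 * tierWidth m η
  | .Pl j => 4 * tierWidth m η + j.val

/-- Preference key of the `i`-th upper-padding agent: its same-index counterpart first. -/
def puKey (i : Fin η) (a : Agent m η) : ℕ :=
  if a = .Pu i then 0 else a.enum + 1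

/-- Preference key of the `i`-th lower-padding agent: its same-index counterpart first. -/
def plKey (i : Fin η) (a : Agent m η) : ℕ :=
  if a = .Pl i then 0 else a.enum + 1

/-- Preference key of the backup agent: `[S | Pu | Pl | B]`. -/
def bKey : Agent m η → ℕ := Agent.enum

/-- Hospital-side preference keys, built from the set `A`. -/
def hospKey (A : Fin m → Fin m → Bool) : Agent m η → Agent m η → ℕ
  | .S i => sKey m η A i
  | .Pu i => puKey i
  | .Pl i => plKey i
  | .B => bKey

/-- Resident-side preference keys, built from the set `B` (pairs are `(hospital, resident)`). -/
def resKey (B : Fin m → Fin m → Bool) : Agent m η → Agent m η → ℕ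
  | .S j => sKey m η (fun j i => B i j) j
  | .Pu i => puKey i
  | .Pl i => plKey i
  | .B => bKey

/-- `(r, h)` is a blocking pair for the perfect matching sending hospital `h` to resident
`μ h` (with inverse `ν`): each strictly prefers the other to its assigned partner. -/
def BlockPair (A B : Fin m → Fin m → Bool) (μ ν : Agent m η → Agent m η)
    (r h : Agent m η) : Prop :=
  hospKey A h r < hospKey A h (μ h) ∧ resKey B r h < resKey B r (ν r)

theorem val_add_two_le_tierWidth (i : Fin m) : (i : ℕ) + 2 ≤ tierWidth m η := by
  simp only [tierWidth]
  omega

theorem sKey_self (mem : Fin m → Fin m → Bool) (i : Fin m) :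
    sKey m η mem i (.S i) = 2 * tierWidth m η + i := by
  simp [sKey]

theorem exists_of_sKey_lt_sKey_self {mem : Fin m → Fin m → Bool} {i : Fin m} {a : Agent m η}
    (h : sKey m η mem i a < sKey m η mem i (.S i)) :
    (∃ j, j ≠ i ∧ mem i j = true ∧ a = .S j) ∨ ∃ j, a = .Pu j := by
  have hi := val_add_two_le_tierWidth (η := η) i
  rw [sKey_self] at h
  cases a with
  | S j =>
    by_cases hji : j = i
    · subst hji
      simp [sKey] at h
    · cases hmem : mem i j
      · simp only [sKey, hji, hmem, if_false, Bool.false_eq_true] at h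
        omega
      · exact .inl ⟨j, hji, hmem, rfl⟩
  | Pu j => exact .inr ⟨j, rfl⟩
  | Pl j => simp only [sKey] at h; omega
  | B => simp only [sKey] at h; omega

theorem sKey_self_lt_sKey_of_not_mem {mem : Fin m → Fin m → Bool} {i j : Fin m}
    (hji : j ≠ i) (hmem : mem i j = false) :
    sKey m η mem i (.S i) < sKey m η mem i (.S j) := by
  have hi := val_add_two_le_tierWidth (η := η) i
  simp only [sKey, hji, hmem, if_true, if_false, Bool.false_eq_true]
  omega

theorem sKey_self_lt_sKey_B (mem : Fin m → Fin m → Bool) (i : Fin m) :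
    sKey m η mem i (.S i) < sKey m η mem i .B := by
  have hi := val_add_two_le_tierWidth (η := η) i
  rw [sKey_self, sKey]
  omega

theorem puKey_self_le (i : Fin η) (a : Agent m η) :
    puKey i (.Pu i : Agent m η) ≤ puKey i a := by
  rw [puKey, if_pos rfl]
  exact Nat.zero_le _

theorem plKey_self_le (i : Fin η) (a : Agent m η) :
    plKey i (.Pl i : Agent m η) ≤ plKey i a := by
  rw [plKey, if_pos rfl]
  exact Nat.zero_le _

theorem predicted_matching_stable_of_disjoint_general
    (m η : ℕ) (A B : Fin m → Fin m → Bool)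
    (hdisj : ∀ i j, ¬ (A i j = true ∧ B i j = true)) :
    ∀ r h : Agent m η, ¬ BlockPair A B id id r h := by
  rintro r h ⟨hh, hr⟩
  cases h with
  | S i =>
    obtain ⟨j, hji, hAij, rfl⟩ | ⟨j, rfl⟩ := exists_of_sKey_lt_sKey_self hh
    · have hBij : B i j = false := by simpa [hAij] using hdisj i j
      exact (sKey_self_lt_sKey_of_not_mem (mem := fun j i => B i j) (Ne.symm hji) hBij).not_gt
        hr
    · exact (puKey_self_le j _).not_gt hr
  | Pu i => exact (puKey_self_le i r).not_gt hh
  | Pl i => exact (plKey_self_le i r).not_gt hh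
  | B =>
    cases r with
    | S j => exact (sKey_self_lt_sKey_B _ j).not_gt hr
    | Pu j => exact (puKey_self_le j _).not_gt hr
    | Pl j => exact (plKey_self_le j _).not_gt hr
    | B => exact lt_irrefl _ hh

/-- In the lower-bound construction, if the sets `A` and `B` are
disjoint (and contain no diagonal pairs), then the predicted matching `μ̂`, matching
same-index agents within every block, is stable: it admits no blocking pair. -/
theorem predicted_matching_stable_of_disjoint
    (m η : ℕ) (A B : Fin m → Fin m → Bool)
    (hA : ∀ i, A i i = false) (hB : ∀ i, B i i = false)
    (hdisj : ∀ i j, ¬ (A i j = true ∧ B i j = true)) :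
    ∀ r h : Agent m η, ¬ BlockPair A B id id r h :=
  predicted_matching_stable_of_disjoint_general m η A B hdisj
end

section
/- In the lower-bound construction from disjointness with |A ∩ B| = 1, say A ∩ B = {(î,ĵ)}, the matching obtained from μ̂ by rematching the î-th hospital in S_h to the ĵ-th resident in S_r, the ĵ-th hospital in S_h to the backup resident B_r, and the backup hospital B_h to the î-th resident in S_r (all other pairs unchanged) is a stable matching, differing from μ̂ in the matches of exactly 6 agents. -/
variable {m η : ℕ}

/-- The matching obtained from the predicted matching by the 3-cycle rematching
`S î ↦ S ĵ`, `S ĵ ↦ B`, `B ↦ S î` on the hospital side. -/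
def mu3 (i j : Fin m) : Agent m η → Agent m η := fun a =>
  if a = .S i then .S j else if a = .S j then .B else if a = .B then .S i else a

/-- The inverse of `mu3`: resident `r`'s assigned hospital. -/
def mu3inv (i j : Fin m) : Agent m η → Agent m η := fun a =>
  if a = .S j then .S i else if a = .B then .S j else if a = .S i then .B else a


/-! Under the rematching every padding agent keeps its top choice, every agent of `S` is matched
at least as well as to the backup agent, and the backup resident ranks the backup hospital last;
so a blocking pair must consist of a hospital `S i` and a resident `S j`. Hospital `S i` prefers
`S j` to its new partner only if `(i, j) ∈ A \ {(î, ĵ)}` or `i = j = ĵ` (the hospital `S ĵ`, now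
matched to the backup, prefers its same-index resident); symmetrically, resident `S j` prefers
`S i` only if `(i, j) ∈ B \ {(î, ĵ)}` or `i = j = î`. Since `A ∩ B = {(î, ĵ)}`, `A` and `B` miss
the diagonal and `î ≠ ĵ`, no pair meets both conditions. -/

section Rematching

variable {k l : Fin m}

@[simp] lemma mu3_S_left : mu3 k l (.S k : Agent m η) = .S l := by simp [mu3]

@[simp] lemma mu3_S_right (hlk : l ≠ k) : mu3 k l (.S l : Agent m η) = .B := by
  simp [mu3, hlk]

lemma mu3_S_of_ne {i : Fin m} (hik : i ≠ k) (hil : i ≠ l) : mu3 k l (.S i : Agent m η) = .S i := by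
  simp [mu3, hik, hil]

@[simp] lemma mu3_B : mu3 k l (.B : Agent m η) = .S k := by simp [mu3]

@[simp] lemma mu3_Pu (i : Fin η) : mu3 k l (.Pu i : Agent m η) = .Pu i := by simp [mu3]

@[simp] lemma mu3_Pl (i : Fin η) : mu3 k l (.Pl i : Agent m η) = .Pl i := by simp [mu3]

lemma mu3inv_eq_mu3_swap : (mu3inv k l : Agent m η → Agent m η) = mu3 l k := by
  funext a
  by_cases hk : a = .S k <;> by_cases hl : a = .S l <;> simp_all [mu3, mu3inv]

@[simp] lemma puKey_self (i : Fin η) : puKey i (.Pu i : Agent m η) = 0 := by simp [puKey]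

@[simp] lemma plKey_self (i : Fin η) : plKey i (.Pl i : Agent m η) = 0 := by simp [plKey]

lemma Agent.enum_le_enum_B (a : Agent m η) : a.enum ≤ (Agent.B : Agent m η).enum := by
  cases a <;> simp only [Agent.enum] <;> omega

lemma val_lt_tierWidth (j : Fin m) : j.val < tierWidth m η := by
  unfold tierWidth
  omega

variable {R : Fin m → Fin m → Bool} {i j : Fin m}

lemma sKey_S_self : sKey m η R i (.S i) = 2 * tierWidth m η + i := by simp [sKey]

lemma sKey_S_of_mem (hij : R i j = true) (hji : j ≠ i) : sKey m η R i (.S j) = j := by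
  simp [sKey, hij, hji]

lemma sKey_S_of_not_mem (hij : R i j = false) (hji : j ≠ i) :
    sKey m η R i (.S j) = 5 * tierWidth m η + j := by
  simp [sKey, hij, hji]

lemma sKey_B : sKey m η R i .B = 3 * tierWidth m η := rfl

lemma sKey_mu3_le_sKey_B (hlk : l ≠ k) (hkl : R k l = true) (i : Fin m) :
    sKey m η R i (mu3 k l (.S i)) ≤ sKey m η R i .B := by
  have := val_lt_tierWidth (η := η) l
  have := val_lt_tierWidth (η := η) i
  rcases eq_or_ne i k with rfl | hik
  · rw [mu3_S_left, sKey_S_of_mem hkl hlk, sKey_B]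
    omega
  rcases eq_or_ne i l with rfl | hil
  · rw [mu3_S_right hlk]
  · rw [mu3_S_of_ne hik hil, sKey_S_self, sKey_B]
    omega

lemma sKey_S_lt_sKey_mu3 (hlk : l ≠ k) (hkl : R k l = true)
    (h : sKey m η R i (.S j) < sKey m η R i (mu3 k l (.S i))) :
    R i j = true ∧ (i = k → j ≠ l) ∨ i = l ∧ j = l := by
  have := val_lt_tierWidth (η := η) l
  rcases eq_or_ne j i with rfl | hji
  · rcases eq_or_ne j l with rfl | hjl
    · exact .inr ⟨rfl, rfl⟩
    rcases eq_or_ne j k with rfl | hjk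
    · rw [mu3_S_left, sKey_S_self, sKey_S_of_mem hkl hlk] at h
      omega
    · rw [mu3_S_of_ne hjk hjl] at h
      exact (lt_irrefl _ h).elim
  cases hij : R i j
  · have := sKey_mu3_le_sKey_B (η := η) hlk hkl i
    rw [sKey_S_of_not_mem hij hji, sKey_B] at *
    omega
  left
  refine ⟨rfl, ?_⟩
  rintro rfl rfl
  rw [mu3_S_left] at h
  exact lt_irrefl _ h

lemma mu3_ne_self_iff (hkl : k ≠ l) {a : Agent m η} :
    mu3 k l a ≠ a ↔ a = .S k ∨ a = .S l ∨ a = .B := by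
  rcases a with i | i | i | _
  · rcases eq_or_ne i k with rfl | hik
    · simp [hkl.symm]
    rcases eq_or_ne i l with rfl | hil
    · simp [hkl.symm]
    · simp [mu3_S_of_ne hik hil, hik, hil]
  all_goals simp

lemma card_filter_mu3_ne_self (hkl : k ≠ l) :
    (Finset.univ.filter fun a : Agent m η => mu3 k l a ≠ a).card = 3 := by
  have hmoved : (Finset.univ.filter fun a : Agent m η => mu3 k l a ≠ a) = {.S k, .S l, .B} := by
    ext a
    simp [mu3_ne_self_iff hkl]
  rw [hmoved, Finset.card_insert_of_notMem (by simp [hkl]), Finset.card_pair (by simp)]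

variable {A B : Fin m → Fin m → Bool}

lemma not_blockPair_mu3_S_S (hA : ∀ i, A i i = false) (hB : ∀ i, B i i = false) (hkl : k ≠ l)
    (hAkl : A k l = true) (hBkl : B k l = true)
    (huniq : ∀ i j, A i j = true → B i j = true → i = k ∧ j = l) (i j : Fin m) :
    ¬ BlockPair A B (mu3 k l) (mu3inv k l) (.S j : Agent m η) (.S i) := by
  rintro ⟨hh, hr⟩
  rw [mu3inv_eq_mu3_swap] at hr
  have hosp := sKey_S_lt_sKey_mu3 hkl.symm hAkl hh
  -- residents face the hospitals' construction with `B` transposed and `k`, `l` swapped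
  have res := sKey_S_lt_sKey_mu3 (R := fun j i => B i j) hkl hBkl hr
  rcases hosp with ⟨hAij, hij⟩ | ⟨rfl, rfl⟩ <;> rcases res with ⟨hBij, hji⟩ | ⟨rfl, hik⟩
  · obtain ⟨rfl, rfl⟩ := huniq i j hAij hBij
    exact hij rfl rfl
  · subst hik
    simp [hA] at hAij
  · simp [hB] at hBij
  · exact hkl hik.symm

lemma not_blockPair_mu3 (hA : ∀ i, A i i = false) (hB : ∀ i, B i i = false) (hkl : k ≠ l)
    (hAkl : A k l = true) (hBkl : B k l = true)
    (huniq : ∀ i j, A i j = true → B i j = true → i = k ∧ j = l) (r h : Agent m η) :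
    ¬ BlockPair A B (mu3 k l) (mu3inv k l) r h := by
  intro hblock
  obtain ⟨hh, hr⟩ := id hblock
  rw [mu3inv_eq_mu3_swap] at hr
  cases h with
  | Pu i => simp [hospKey] at hh
  | Pl i => simp [hospKey] at hh
  | B =>
    cases r with
    | S j => exact (sKey_mu3_le_sKey_B (R := fun j i => B i j) hkl hBkl j).not_gt hr
    | Pu j => simp [resKey] at hr
    | Pl j => simp [resKey] at hr
    | B => exact (Agent.enum_le_enum_B _).not_gt (by simpa [resKey, bKey] using hr)
  | S i =>
    cases r with
    | S j => exact not_blockPair_mu3_S_S hA hB hkl hAkl hBkl huniq i j hblock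
    | B => exact (sKey_mu3_le_sKey_B hkl.symm hAkl i).not_gt hh
    | Pu j => simp [resKey] at hr
    | Pl j => simp [resKey] at hr

end Rematching

/-- If `A ∩ B = {(î, ĵ)}` with `î ≠ ĵ`, then rematching the `î`-th
hospital to the `ĵ`-th resident, the `ĵ`-th hospital to the backup resident, and the
backup hospital to the `î`-th resident (all other pairs unchanged) yields a stable
matching, differing from the predicted matching in the matches of exactly 6 agents
(3 hospitals and 3 residents). -/
theorem rematching_stable_of_single_intersection
    (m η : ℕ) (A B : Fin m → Fin m → Bool)
    (hA : ∀ i, A i i = false) (hB : ∀ i, B i i = false)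
    (ihat jhat : Fin m) (hne : ihat ≠ jhat)
    (hmem : A ihat jhat = true ∧ B ihat jhat = true)
    (huniq : ∀ i j, A i j = true → B i j = true → i = ihat ∧ j = jhat) :
    (∀ r h : Agent m η, ¬ BlockPair A B (mu3 ihat jhat) (mu3inv ihat jhat) r h) ∧
    (Finset.univ.filter (fun h : Agent m η => mu3 ihat jhat h ≠ h)).card = 3 ∧
    (Finset.univ.filter (fun r : Agent m η => mu3inv ihat jhat r ≠ r)).card = 3 := by
  refine ⟨not_blockPair_mu3 hA hB hne hmem.1 hmem.2 huniq, card_filter_mu3_ne_self hne, ?_⟩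
  rw [mu3inv_eq_mu3_swap]
  exact card_filter_mu3_ne_self hne.symm
end

section
/- In the lower-bound construction, if the predicted matching μ̂ is not stable, then every stable matching μ of the instance contains an agent a such that the rank of μ(a) on a's list differs from the rank of μ̂(a) on a's list by more than η. -/
variable {m η : ℕ}

/-- The rank (1-based) of `x` in the strict order given by the key function `key`. -/
def rankIn (key : Agent m η → ℕ) (x : Agent m η) : ℕ :=
  (Finset.univ.filter (fun y => key y < key x)).card + 1


theorem sKey_S_lt_sKey_self_iff (mem : Fin m → Fin m → Bool) (i j : Fin m) :
    sKey m η mem i (.S j) < sKey m η mem i (.S i) ↔ j ≠ i ∧ mem i j = true := by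
  have := i.isLt; have := j.isLt
  by_cases hji : j = i
  · simp [sKey, hji]
  · cases h : mem i j <;> simp [sKey, hji, h, tierWidth] <;> omega

theorem sKey_lt_tierWidth_iff (mem : Fin m → Fin m → Bool) (i : Fin m) (x : Agent m η) :
    sKey m η mem i x < tierWidth m η ↔ ∃ j, x = .S j ∧ j ≠ i ∧ mem i j = true := by
  cases x with
  | S j =>
    have := j.isLt
    by_cases hji : j = i
    · simp [sKey, hji]; omega
    · cases h : mem i j <;> simp [sKey, hji, h, tierWidth] <;> omega
  | Pu l => simp [sKey]
  | Pl l => simp [sKey]; omega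
  | B => simp [sKey]; omega

theorem exists_S_of_blockPair_id {A B : Fin m → Fin m → Bool} {r h : Agent m η}
    (hrh : BlockPair A B id id r h) : ∃ i j, h = .S i ∧ r = .S j := by
  obtain ⟨hh, hr⟩ := hrh
  -- Padding agents hold their first choice under `id`, and `S`-agents prefer it to `B`.
  cases h <;> cases r <;>
    simp_all [hospKey, resKey, sKey, puKey, plKey, bKey, Agent.enum, tierWidth] <;> omega

theorem rankIn_add_card_le {key : Agent m η → ℕ} {x y : Agent m η} {s : Finset (Agent m η)}
    (hx : x ∈ s) (hs : ∀ z ∈ s, key x ≤ key z ∧ key z < key y) :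
    rankIn key x + s.card ≤ rankIn key y := by
  have hdisj : Disjoint (Finset.univ.filter fun z => key z < key x) s :=
    Finset.disjoint_right.mpr fun z hz => by simpa using (hs z hz).1
  have hsub : (Finset.univ.filter fun z => key z < key x) ∪ s ⊆
      Finset.univ.filter fun z => key z < key y := by
    intro z hz
    have hxy := (hs x hx).2
    rcases Finset.mem_union.mp hz with hz | hz
    · simp only [Finset.mem_filter, Finset.mem_univ, true_and] at hz ⊢
      omega
    · simpa using (hs z hz).2
  have := Finset.card_le_card hsub
  rw [Finset.card_union_of_disjoint hdisj] at this
  unfold rankIn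
  omega

theorem rankIn_sKey_add_lt_of_mem (mem : Fin m → Fin m → Bool) {i j : Fin m} (hji : j ≠ i)
    (hij : mem i j = true) :
    rankIn (sKey m η mem i) (.S j) + η < rankIn (sKey m η mem i) (.S i) := by
  let s : Finset (Agent m η) := insert (Agent.S j) (Finset.univ.image Agent.Pu)
  have hcard : s.card = η + 1 := by
    rw [Finset.card_insert_of_notMem (by simp),
      Finset.card_image_of_injective _ fun _ _ => Agent.Pu.inj, Finset.card_univ, Fintype.card_fin]
  have hs : ∀ z ∈ s, sKey m η mem i (.S j) ≤ sKey m η mem i z ∧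
      sKey m η mem i z < sKey m η mem i (.S i) := by
    have := i.isLt; have := j.isLt
    simp only [s, Finset.mem_insert, Finset.mem_image, Finset.mem_univ, true_and]
    rintro z (rfl | ⟨l, rfl⟩)
    · simp [sKey, hji, hij, tierWidth]; omega
    · have := l.isLt
      simp [sKey, hji, hij, tierWidth]
      omega
  have := rankIn_add_card_le (Finset.mem_insert_self _ _) hs
  rw [hcard] at this
  omega

theorem tierWidth_le_sKey_of_abs_rankIn_sub_le (mem : Fin m → Fin m → Bool) (i : Fin m)
    (x : Agent m η)
    (hx : |(rankIn (sKey m η mem i) x : ℤ) - rankIn (sKey m η mem i) (.S i)| ≤ η) :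
    tierWidth m η ≤ sKey m η mem i x := by
  by_contra hlt
  obtain ⟨j, rfl, hji, hij⟩ := (sKey_lt_tierWidth_iff mem i x).mp (not_le.mp hlt)
  have hgap := rankIn_sKey_add_lt_of_mem (η := η) mem hji hij
  have := (abs_le.mp hx).1
  omega

theorem unstable_prediction_forces_large_error_general
    (m η : ℕ) (A B : Fin m → Fin m → Bool)
    (hunstable : ∃ r h : Agent m η, BlockPair A B id id r h) :
    ∀ μ : Agent m η ≃ Agent m η,
      (∀ r h : Agent m η, ¬ BlockPair A B μ μ.symm r h) →
      ∃ a : Agent m η,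
        (η : ℤ) < |(rankIn (hospKey A a) (μ a) : ℤ) - (rankIn (hospKey A a) a : ℤ)| ∨
        (η : ℤ) < |(rankIn (resKey B a) (μ.symm a) : ℤ) - (rankIn (resKey B a) a : ℤ)| := by
  intro μ hstable
  by_contra! hclose
  obtain ⟨r, h, hrh⟩ := hunstable
  obtain ⟨i, j, rfl, rfl⟩ := exists_S_of_blockPair_id hrh
  obtain ⟨hji, hAij⟩ := (sKey_S_lt_sKey_self_iff A i j).mp hrh.1
  obtain ⟨hij, hBij⟩ := (sKey_S_lt_sKey_self_iff (fun j i => B i j) j i).mp hrh.2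
  refine hstable (.S j) (.S i) ⟨?_, ?_⟩
  · calc hospKey A (.S i) (.S j) < tierWidth m η :=
          (sKey_lt_tierWidth_iff A i _).mpr ⟨j, rfl, hji, hAij⟩
      _ ≤ hospKey A (.S i) (μ (.S i)) :=
          tierWidth_le_sKey_of_abs_rankIn_sub_le A i _ (hclose (.S i)).1
  · calc resKey B (.S j) (.S i) < tierWidth m η :=
          (sKey_lt_tierWidth_iff (fun j i => B i j) j _).mpr ⟨i, rfl, hij, hBij⟩
      _ ≤ resKey B (.S j) (μ.symm (.S j)) :=
          tierWidth_le_sKey_of_abs_rankIn_sub_le (fun j i => B i j) j _ (hclose (.S j)).2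

/-- In the lower-bound construction, if the predicted matching (matching
same-index agents) is not stable, then every stable matching `μ` of the instance has an
agent whose partner's rank on its list differs from the rank of its predicted partner by
more than `η`. -/
theorem unstable_prediction_forces_large_error
    (m η : ℕ) (A B : Fin m → Fin m → Bool)
    (hA : ∀ i, A i i = false) (hB : ∀ i, B i i = false)
    (hunstable : ∃ r h : Agent m η, BlockPair A B id id r h) :
    ∀ μ : Agent m η ≃ Agent m η,
      (∀ r h : Agent m η, ¬ BlockPair A B μ μ.symm r h) →
      ∃ a : Agent m η,
        (η : ℤ) < |(rankIn (hospKey A a) (μ a) : ℤ) - (rankIn (hospKey A a) a : ℤ)| ∨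
        (η : ℤ) < |(rankIn (resKey B a) (μ.symm a) : ℤ) - (rankIn (resKey B a) a : ℤ)| :=
  unstable_prediction_forces_large_error_general m η A B hunstable
end
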